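/- Fix k ∈ ℕ and a finite vertex set X with s, t ∉ X. The operator ⊕ on subsets of 𝔅(X) is commutative and associative: for all C1, C2, C3 ⊆ 𝔅(X), C1 ⊕ C2 = C2 ⊕ C1 and (C1 ⊕ C2) ⊕ C3 = C1 ⊕ (C2 ⊕ C3). Moreover C1 ⊕ C2 ⊆ 𝔅(X), and ∅ ⊕ C1 = C1. -/

import Mathlib

/-! Configurations for the `k`-path dynamic program, following the paper.
Graphs live on an ambient vertex type `α`; a graph "with vertex set `S`" is a
`SimpleGraph α` all of whose edges have both endpoints in `S`. -/

/-- A linear forest: a simple graph that is acyclic and in which every vertex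
has degree at most 2. -/
def IsLinearForest {α : Type*} (H : SimpleGraph α) : Prop :=
  H.IsAcyclic ∧ ∀ v : α, (H.neighborSet v).encard ≤ 2

/-- `(H, i)` is a configuration over `X` (an element of `𝔅(X)`): `H` is a linear
forest with vertex set `X ∪ {s, t}` in which `s` and `t` have degree at most 1,
`i ∈ {0, 1, …, k-1} ∪ {∞}`, and `i = 0` whenever `H` has no edges. -/
def IsConfig {α : Type*} (k : ℕ) (s t : α) (X : Set α) (c : SimpleGraph α × ℕ∞) : Prop :=
  (∀ a b : α, c.1.Adj a b → a ∈ X ∪ {s, t} ∧ b ∈ X ∪ {s, t}) ∧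
  IsLinearForest c.1 ∧
  (c.1.neighborSet s).encard ≤ 1 ∧
  (c.1.neighborSet t).encard ≤ 1 ∧
  (c.2 < (k : ℕ∞) ∨ c.2 = ⊤) ∧
  (c.1.edgeSet = ∅ → c.2 = 0)

/-- The set `𝔅(X)` of all configurations over `X`. -/
def ConfigSet {α : Type*} (k : ℕ) (s t : α) (X : Set α) : Set (SimpleGraph α × ℕ∞) :=
  {c | IsConfig k s t X c}

/-- The configuration `(H, i)` is realized in the boundaried graph `(G, X)`
(where `G` has vertex set `VG`): there is a family of paths `{P_e : e ∈ E(H)}`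
in `G` such that for each edge `e = xy` of `H`, each endpoint of `e` lying in
`X` is the corresponding endpoint of `P_e` (an endpoint in `{s, t}` may
correspond to an arbitrary vertex of `G`) and `V(P_e) ∩ X = {x, y} ∩ X`; two
distinct paths are vertex-disjoint except that they may share an endpoint when
the corresponding edges of `H` share an endpoint; and the total number of edges
of the paths equals `i` if `i < ∞`, and is at least `k` if `i = ∞`. -/
def Realized {α : Type*} (k : ℕ) (s t : α) (VG : Set α) (G : SimpleGraph α) (X : Set α)
    (H : SimpleGraph α) (i : ℕ∞) : Prop :=
  ∃ (ox oy pe qe : Sym2 α → α) (P : (e : Sym2 α) → G.Walk (pe e) (qe e)),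
    (∀ e ∈ H.edgeSet, e = s(ox e, oy e)) ∧
    (∀ e ∈ H.edgeSet, (P e).IsPath) ∧
    (∀ e ∈ H.edgeSet, ∀ v ∈ (P e).support, v ∈ VG) ∧
    (∀ e ∈ H.edgeSet, ox e ∈ X → pe e = ox e) ∧
    (∀ e ∈ H.edgeSet, oy e ∈ X → qe e = oy e) ∧
    (∀ e ∈ H.edgeSet, {v | v ∈ (P e).support} ∩ X = ({ox e, oy e} : Set α) ∩ X) ∧
    (∀ e ∈ H.edgeSet, ∀ f ∈ H.edgeSet, e ≠ f → ∀ v : α,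
      v ∈ (P e).support → v ∈ (P f).support →
      (∃ w, w ∈ e ∧ w ∈ f) ∧ (v = pe e ∨ v = qe e) ∧ (v = pe f ∨ v = qe f)) ∧
    ∃ hE : H.edgeSet.Finite,
      (∀ n : ℕ, i = (n : ℕ∞) → ∑ e ∈ hE.toFinset, (P e).length = n) ∧
      (i = ⊤ → k ≤ ∑ e ∈ hE.toFinset, (P e).length)

/-- `conf(G, X)`: the set of configurations over `X` realized in `(G, X)`. -/
def conf {α : Type*} (k : ℕ) (s t : α) (VG : Set α) (G : SimpleGraph α) (X : Set α) :
    Set (SimpleGraph α × ℕ∞) :=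
  {c | IsConfig k s t X c ∧ Realized k s t VG G X c.1 c.2}

/-- `join(H, x)` for `x` of degree 2 with neighbors `y, z`: delete `x` and add
the edge `yz`. -/
def joinAt {α : Type*} (H : SimpleGraph α) (x y z : α) : SimpleGraph α where
  Adj a b := a ≠ b ∧ ((H.Adj a b ∧ a ≠ x ∧ b ≠ x) ∨ (a = y ∧ b = z) ∨ (a = z ∧ b = y))
  symm := by
    constructor
    intro a b h
    obtain ⟨hab, h⟩ := h
    refine ⟨hab.symm, ?_⟩
    rcases h with ⟨h, hx1, hx2⟩ | ⟨h1, h2⟩ | ⟨h1, h2⟩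
    · exact Or.inl ⟨h.symm, hx2, hx1⟩
    · exact Or.inr (Or.inr ⟨h2, h1⟩)
    · exact Or.inr (Or.inl ⟨h2, h1⟩)
  loopless := by constructor; intro a h; exact h.1 rfl

/-- Configurations `(H1, i1)` and `(H2, i2)` are mergeable: their edge sets are
disjoint and `H1 ⊕ H2` is a linear forest in which `s` and `t` have degree at
most 1. -/
def Mergeable {α : Type*} (s t : α) (H1 H2 : SimpleGraph α) : Prop :=
  Disjoint H1.edgeSet H2.edgeSet ∧ IsLinearForest (H1 ⊔ H2) ∧
    ((H1 ⊔ H2).neighborSet s).encard ≤ 1 ∧ ((H1 ⊔ H2).neighborSet t).encard ≤ 1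

/-- The truncated sum `i ⊞ j`: `i + j` if both are finite and `i + j ≤ k - 1`,
and `∞` otherwise. -/
def truncAdd (k : ℕ) (i j : ℕ∞) : ℕ∞ :=
  if i + j < (k : ℕ∞) then i + j else ⊤

/-- The operator `⊕` on sets of configurations:
`C1 ⊕ C2 = C1 ∪ C2 ∪ {(H1 ⊕ H2, i1 ⊞ i2) : (H1,i1) ∈ C1, (H2,i2) ∈ C2 mergeable}`. -/
def confOplus {α : Type*} (k : ℕ) (s t : α) (C1 C2 : Set (SimpleGraph α × ℕ∞)) :
    Set (SimpleGraph α × ℕ∞) :=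
  C1 ∪ C2 ∪ {c | ∃ H1 i1 H2 i2, (H1, i1) ∈ C1 ∧ (H2, i2) ∈ C2 ∧
    Mergeable s t H1 H2 ∧ c = (H1 ⊔ H2, truncAdd k i1 i2)}


section Aux

variable {α : Type*}

lemma IsLinearForest.mono {H G : SimpleGraph α} (hle : H ≤ G)
    (hG : IsLinearForest G) : IsLinearForest H := by
  refine ⟨fun v c hc => hG.1 (c.mapLe hle) ((SimpleGraph.Walk.mapLe_isCycle hle).2 hc), ?_⟩
  intro v
  exact le_trans (Set.encard_mono (fun w hw => hle hw)) (hG.2 v)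

lemma truncAdd_comm (k : ℕ) (i j : ℕ∞) : truncAdd k i j = truncAdd k j i := by
  simp [truncAdd, add_comm]

lemma truncAdd_eq_left (k : ℕ) (i j l : ℕ∞) :
    truncAdd k (truncAdd k i j) l = if i + j + l < (k : ℕ∞) then i + j + l else ⊤ := by
  by_cases h1 : i + j < (k : ℕ∞)
  · simp [truncAdd, h1]
  · have h2 : ¬ (i + j + l < (k : ℕ∞)) := fun h => h1 (lt_of_le_of_lt le_self_add h)
    simp [truncAdd, h1, h2]

lemma truncAdd_eq_right (k : ℕ) (i j l : ℕ∞) :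
    truncAdd k i (truncAdd k j l) = if i + j + l < (k : ℕ∞) then i + j + l else ⊤ := by
  rw [truncAdd_comm, truncAdd_comm k j l, truncAdd_eq_left]
  have : l + j + i = i + j + l := by ring
  rw [this]

lemma truncAdd_assoc (k : ℕ) (i j l : ℕ∞) :
    truncAdd k (truncAdd k i j) l = truncAdd k i (truncAdd k j l) := by
  rw [truncAdd_eq_left, truncAdd_eq_right]

lemma mergeable_comm {s t : α} {H1 H2 : SimpleGraph α} (h : Mergeable s t H1 H2) :
    Mergeable s t H2 H1 := by
  obtain ⟨hd, hl, hs, ht⟩ := h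
  exact ⟨hd.symm, by rwa [sup_comm], by rwa [sup_comm], by rwa [sup_comm]⟩

lemma merge_rot {s t : α} {H1 H2 H3 : SimpleGraph α}
    (m12 : Mergeable s t H1 H2) (m123 : Mergeable s t (H1 ⊔ H2) H3) :
    Mergeable s t H2 H3 ∧ Mergeable s t H1 (H2 ⊔ H3) := by
  obtain ⟨d12, _, _, _⟩ := m12
  obtain ⟨d3, lf, ns, nt⟩ := m123
  rw [SimpleGraph.edgeSet_sup, Set.disjoint_union_left] at d3
  have hle : H2 ⊔ H3 ≤ H1 ⊔ H2 ⊔ H3 :=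
    sup_le (le_sup_of_le_left le_sup_right) le_sup_right
  constructor
  · refine ⟨d3.2, IsLinearForest.mono hle lf, ?_, ?_⟩
    · exact le_trans (Set.encard_mono (fun w hw => hle hw)) ns
    · exact le_trans (Set.encard_mono (fun w hw => hle hw)) nt
  · refine ⟨?_, ?_, ?_, ?_⟩
    · rw [SimpleGraph.edgeSet_sup]
      exact Set.disjoint_union_right.2 ⟨d12, d3.1⟩
    · rw [← sup_assoc]; exact lf
    · rw [← sup_assoc]; exact ns
    · rw [← sup_assoc]; exact nt

lemma merge_rot' {s t : α} {H1 H2 H3 : SimpleGraph α}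
    (m23 : Mergeable s t H2 H3) (m123 : Mergeable s t H1 (H2 ⊔ H3)) :
    Mergeable s t H1 H2 ∧ Mergeable s t (H1 ⊔ H2) H3 := by
  have m321 : Mergeable s t (H3 ⊔ H2) H1 := by
    rw [sup_comm] at m123; exact mergeable_comm m123
  have := merge_rot (mergeable_comm m23) m321
  refine ⟨mergeable_comm this.1, ?_⟩
  rw [sup_comm H1 H2]
  exact mergeable_comm this.2

lemma merge_isConfig {k : ℕ} {s t : α} {X : Set α} {H1 H2 : SimpleGraph α} {i1 i2 : ℕ∞}
    (c1 : IsConfig k s t X (H1, i1)) (c2 : IsConfig k s t X (H2, i2))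
    (m : Mergeable s t H1 H2) : IsConfig k s t X (H1 ⊔ H2, truncAdd k i1 i2) := by
  obtain ⟨a1, _, _, _, b1, e1⟩ := c1
  obtain ⟨a2, _, _, _, b2, e2⟩ := c2
  obtain ⟨_, lf, ns, nt⟩ := m
  refine ⟨?_, lf, ns, nt, ?_, ?_⟩
  · intro a b hab
    rcases hab with h | h
    · exact a1 a b h
    · exact a2 a b h
  · simp only [truncAdd]
    split
    · exact Or.inl (by assumption)
    · exact Or.inr rfl
  · intro hemp
    rw [SimpleGraph.edgeSet_sup, Set.union_empty_iff] at hemp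
    have hi1 : i1 = 0 := e1 hemp.1
    have hi2 : i2 = 0 := e2 hemp.2
    have hk : (0 : ℕ∞) < (k : ℕ∞) := by
      rcases b1 with h | h
      · rw [hi1] at h; exact h
      · rw [hi1] at h; exact absurd h (by simp)
    simp [truncAdd, hi1, hi2, hk]

end Aux

/-- the operator `⊕` on subsets of `𝔅(X)` is commutative and
associative; moreover `C1 ⊕ C2 ⊆ 𝔅(X)` and `∅ ⊕ C1 = C1`. -/
theorem stmt6 {α : Type*} (k : ℕ) (s t : α) (hst : s ≠ t)
    (X : Set α) (hXfin : X.Finite) (hs : s ∉ X) (ht : t ∉ X)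
    (C1 C2 C3 : Set (SimpleGraph α × ℕ∞))
    (h1 : C1 ⊆ ConfigSet k s t X) (h2 : C2 ⊆ ConfigSet k s t X)
    (h3 : C3 ⊆ ConfigSet k s t X) :
    confOplus k s t C1 C2 = confOplus k s t C2 C1 ∧
    confOplus k s t (confOplus k s t C1 C2) C3 =
      confOplus k s t C1 (confOplus k s t C2 C3) ∧
    confOplus k s t C1 C2 ⊆ ConfigSet k s t X ∧
    confOplus k s t ∅ C1 = C1 := by
  have comm : ∀ A B : Set (SimpleGraph α × ℕ∞), confOplus k s t A B = confOplus k s t B A := by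
    intro A B
    have key : ∀ A B : Set (SimpleGraph α × ℕ∞), confOplus k s t A B ⊆ confOplus k s t B A := by
      intro A B c hc
      rcases hc with (h | h) | h
      · exact Or.inl (Or.inr h)
      · exact Or.inl (Or.inl h)
      · obtain ⟨H1, i1, H2, i2, m1, m2, m, rfl⟩ := h
        refine Or.inr ⟨H2, i2, H1, i1, m2, m1, mergeable_comm m, ?_⟩
        rw [sup_comm, truncAdd_comm]
    exact le_antisymm (key A B) (key B A)
  refine ⟨comm C1 C2, ?_, ?_, ?_⟩
  · apply le_antisymm
    · intro c hc
      rcases hc with ((((h | h) | h) | h) | h)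
      · exact Or.inl (Or.inl h)
      · exact Or.inl (Or.inr (Or.inl (Or.inl h)))
      · obtain ⟨H1, i1, H2, i2, m1, m2, m, rfl⟩ := h
        exact Or.inr ⟨H1, i1, H2, i2, m1, Or.inl (Or.inl m2), m, rfl⟩
      · exact Or.inl (Or.inr (Or.inl (Or.inr h)))
      · obtain ⟨A, a, H3, i3, mA, m3, m, rfl⟩ := h
        rcases mA with (hA | hA) | hA
        · exact Or.inr ⟨A, a, H3, i3, hA, Or.inl (Or.inr m3), m, rfl⟩
        · exact Or.inl (Or.inr (Or.inr ⟨A, a, H3, i3, hA, m3, m, rfl⟩))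
        · obtain ⟨H1, i1, H2, i2, m1, m2, m12, heq⟩ := hA
          rw [Prod.mk.injEq] at heq
          obtain ⟨rfl, rfl⟩ := heq
          obtain ⟨m23, m123⟩ := merge_rot m12 m
          refine Or.inr ⟨H1, i1, H2 ⊔ H3, truncAdd k i2 i3, m1,
            Or.inr ⟨H2, i2, H3, i3, m2, m3, m23, rfl⟩, m123, ?_⟩
          rw [sup_assoc, truncAdd_assoc]
    · intro c hc
      rcases hc with ((h | ((h | h) | h)) | h)
      · exact Or.inl (Or.inl (Or.inl (Or.inl h)))
      · exact Or.inl (Or.inl (Or.inl (Or.inr h)))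
      · exact Or.inl (Or.inr h)
      · obtain ⟨H2, i2, H3, i3, m2, m3, m, rfl⟩ := h
        exact Or.inr ⟨H2, i2, H3, i3, Or.inl (Or.inr m2), m3, m, rfl⟩
      · obtain ⟨H1, i1, B, b, m1, mB, m, rfl⟩ := h
        rcases mB with (hB | hB) | hB
        · refine Or.inl (Or.inl (Or.inr ?_))
          exact ⟨H1, i1, B, b, m1, hB, m, rfl⟩
        · exact Or.inr ⟨H1, i1, B, b, Or.inl (Or.inl m1), hB, m, rfl⟩
        · obtain ⟨H2, i2, H3, i3, m2, m3, m23, heq⟩ := hB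
          rw [Prod.mk.injEq] at heq
          obtain ⟨rfl, rfl⟩ := heq
          obtain ⟨m12, m123⟩ := merge_rot' m23 m
          refine Or.inr ⟨H1 ⊔ H2, truncAdd k i1 i2, H3, i3,
            Or.inr ⟨H1, i1, H2, i2, m1, m2, m12, rfl⟩, m3, m123, ?_⟩
          rw [sup_assoc, truncAdd_assoc]
  · intro c hc
    rcases hc with (h | h) | h
    · exact h1 h
    · exact h2 h
    · obtain ⟨H1, i1, H2, i2, m1, m2, m, rfl⟩ := h
      exact merge_isConfig (h1 m1) (h2 m2) m
  · ext c
    simp [confOplus]
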